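/- Let O_K be the ring of integers of K = Q₃(ω) with ω a primitive cube root of unity, π = ω − 1, and v₃ the valuation with v₃(3) = 1. Let R be a commutative O_K-algebra, r ∈ O_K, ξ an indeterminate, g ∈ R[[rξ]], and k an indeterminate. Then the binomial expansion (1 + rπξg)^k := Σ_{n≥0} C(k,n)(rπξg)ⁿ lies in 1 + rπk·ξ·R[[k, rξ]]. -/

import Mathlib

/-- The field `K = ℚ₃(ω) = ℚ_[3][X]/(X² + X + 1)`, with `ω` a primitive cube root of
unity. -/
noncomputable abbrev K3 : Type :=
  Polynomial ℚ_[3] ⧸ Ideal.span {(Polynomial.X : Polynomial ℚ_[3]) ^ 2 + Polynomial.X + 1}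

noncomputable instance : Algebra ℤ_[3] K3 :=
  ((algebraMap ℚ_[3] K3).comp (algebraMap ℤ_[3] ℚ_[3])).toAlgebra

/-- The primitive cube root of unity `ω ∈ K`. -/
noncomputable def ω3 : K3 := Ideal.Quotient.mk _ Polynomial.X

/-- The uniformizer `π = ω - 1` of `O_K`. -/
noncomputable def π3 : K3 := ω3 - 1

/-- The binomial coefficient `C(k, n) = k(k-1)⋯(k-n+1)/n!` evaluated at `k = X 0`, as a
two-variable power series (in the variables `k = X 0` and `ξ = X 1`). -/
noncomputable def binomK (A : Type) [CommRing A] [Algebra ℚ A] (n : ℕ) :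
    MvPowerSeries (Fin 2) A :=
  ((n.factorial : ℚ)⁻¹) • ∏ i ∈ Finset.range n, (MvPowerSeries.X 0 - (i : MvPowerSeries (Fin 2) A))

/-- The binomial expansion `(1 + rπξg)^k = Σ_{n≥0} C(k,n)(rπξg)ⁿ`, a well-defined
two-variable power series in `k = X 0` and `ξ = X 1` since `(rπξg)ⁿ` is divisible
by `ξⁿ`. -/
noncomputable def binomialExpansion (A : Type) [CommRing A] [Algebra K3 A] [Algebra ℚ A]
    (r : K3) (g : MvPowerSeries (Fin 2) A) : MvPowerSeries (Fin 2) A :=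
  fun s => ∑ n ∈ Finset.range (s 1 + 1),
    MvPowerSeries.coeff s
      (binomK A n * (algebraMap K3 A (r * π3) • (MvPowerSeries.X 1 * g)) ^ n)

/-! Expanding `C(k, n + 1)` as `k (k - 1) ⋯ (k - n) / (n + 1)!` gives
`C(k, n + 1) (rπξg) ^ (n + 1) = rπkξ · (π ^ n / (n + 1)!) (k - 1) ⋯ (k - n) g (rξg) ^ n`.
By Legendre's formula `2 v₃((n + 1)!) ≤ n`, and `π² = -3ω` with `ω` a unit, so `π ^ n / (n + 1)!`
lies in `O_K`. Hence every term with `n ≥ 1` is `rπkξ` times an element of `R[[k, rξ]]`, and so is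
their `ξ`-adically convergent sum. -/

open MvPowerSeries Finset Nat

lemma ω3_sq_add_ω3_add_one : ω3 ^ 2 + ω3 + 1 = 0 := by
  have h : ((Polynomial.X : Polynomial ℚ_[3]) ^ 2 + Polynomial.X + 1) ∈
      Ideal.span {(Polynomial.X : Polynomial ℚ_[3]) ^ 2 + Polynomial.X + 1} :=
    Ideal.subset_span rfl
  have := Ideal.Quotient.eq_zero_iff_mem.2 h
  rwa [map_add, map_add, map_pow, map_one] at this

lemma π3_sq : π3 ^ 2 = -3 * ω3 := by
  unfold π3
  linear_combination ω3_sq_add_ω3_add_one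

lemma isIntegral_ω3 : IsIntegral ℤ_[3] ω3 := by
  refine ⟨Polynomial.X ^ 2 + Polynomial.X + 1, by monicity!, ?_⟩
  simpa using ω3_sq_add_ω3_add_one

lemma isIntegral_π3 : IsIntegral ℤ_[3] π3 := isIntegral_ω3.sub isIntegral_one

lemma PadicInt.isUnit_natCast_ordCompl (p : ℕ) [hp : Fact p.Prime] {n : ℕ} (hn : n ≠ 0) :
    IsUnit ((ordCompl[p] n : ℕ) : ℤ_[p]) :=
  PadicInt.isUnit_iff.2 <| PadicInt.norm_natCast_eq_one_iff.2 <|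
    (hp.out.coprime_iff_not_dvd).2 (not_dvd_ordCompl hp.out hn)

lemma algebraMap_three_inv_mul_π3_sq : algebraMap ℚ K3 3⁻¹ * π3 ^ 2 = -ω3 := by
  have : algebraMap ℚ K3 3⁻¹ * 3 = 1 := by
    rw [← map_ofNat (algebraMap ℚ K3) 3, ← map_mul, inv_mul_cancel₀ three_ne_zero, map_one]
  linear_combination (-ω3) * this + algebraMap ℚ K3 3⁻¹ * π3_sq

lemma algebraMap_natCast_inv_eq_units_inv {m : ℕ} (u : ℤ_[3]ˣ) (hu : (u : ℤ_[3]) = m) :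
    algebraMap ℚ K3 (m : ℚ)⁻¹ = algebraMap ℤ_[3] K3 ↑u⁻¹ := by
  have hm : m ≠ 0 := by
    rintro rfl
    simp at hu
  have ha : algebraMap ℚ K3 (m : ℚ)⁻¹ * (m : K3) = 1 := by
    rw [← map_natCast (algebraMap ℚ K3), ← map_mul, inv_mul_cancel₀ (by exact_mod_cast hm),
      map_one]
  have hb : (m : K3) * algebraMap ℤ_[3] K3 ↑u⁻¹ = 1 := by
    rw [← map_natCast (algebraMap ℤ_[3] K3), ← hu, ← map_mul, Units.mul_inv, map_one]
  linear_combination algebraMap ℤ_[3] K3 ↑u⁻¹ * ha - algebraMap ℚ K3 (m : ℚ)⁻¹ * hb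

lemma isIntegral_factorial_inv_mul_π3_pow (n : ℕ) :
    IsIntegral ℤ_[3] (algebraMap ℚ K3 ((n + 1)! : ℚ)⁻¹ * π3 ^ n) := by
  have : Fact (Nat.Prime 3) := ⟨Nat.prime_three⟩
  set v := (n + 1)!.factorization 3
  set m := ordCompl[3] (n + 1)!
  have hv : 2 * v ≤ n := by
    have := sub_one_mul_padicValNat_factorial_lt_of_ne_zero 3 (n := n + 1) (by omega)
    rw [← factorization_def _ Nat.prime_three] at this
    omega
  have hfac : ((n + 1)! : ℚ) = 3 ^ v * m := by
    exact_mod_cast (ordProj_mul_ordCompl_eq_self (n + 1)! 3).symm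
  obtain ⟨u, hu⟩ := PadicInt.isUnit_natCast_ordCompl 3 (factorial_ne_zero (n + 1))
  have hπ : π3 ^ n = (π3 ^ 2) ^ v * π3 ^ (n - 2 * v) := by
    rw [← pow_mul, ← pow_add]
    congr 1
    omega
  have : algebraMap ℚ K3 ((n + 1)! : ℚ)⁻¹ * π3 ^ n =
      (-ω3) ^ v * π3 ^ (n - 2 * v) * algebraMap ℤ_[3] K3 ↑u⁻¹ := by
    rw [hfac, mul_inv, ← inv_pow, map_mul, map_pow, algebraMap_natCast_inv_eq_units_inv u hu,
      ← algebraMap_three_inv_mul_π3_sq, hπ]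
    ring
  rw [this]
  exact ((isIntegral_ω3.neg.pow _).mul (isIntegral_π3.pow _)).mul isIntegral_algebraMap

lemma Subring.exists_sum_eq_mul {S ι : Type*} [CommRing S] (R : Subring S) (a : S)
    (T : Finset ι) (f : ι → S) (h : ∀ p ∈ T, ∃ c ∈ R, f p = a * c) :
    ∃ c ∈ R, ∑ p ∈ T, f p = a * c := by
  choose! c hcR hc using h
  exact ⟨∑ p ∈ T, c p, R.sum_mem hcR, by rw [mul_sum]; exact sum_congr rfl hc⟩

namespace MvPowerSeries

variable {σ S : Type*} [CommRing S]

/-- `∑ₙ F n`, computed coefficientwise by a finite sum; it is the `X i`-adic sum of the `F n`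
when `X i ^ n ∣ F n`. -/
def adicSum (i : σ) (F : ℕ → MvPowerSeries σ S) : MvPowerSeries σ S :=
  fun s => ∑ n ∈ range (s i + 1), coeff s (F n)

lemma coeff_adicSum (i : σ) (F : ℕ → MvPowerSeries σ S) (s : σ →₀ ℕ) :
    coeff s (adicSum i F) = ∑ n ∈ range (s i + 1), coeff s (F n) := rfl

lemma coeff_X_mul [DecidableEq σ] (i : σ) (f : MvPowerSeries σ S) (s : σ →₀ ℕ) :
    coeff s (X i * f) = if s i = 0 then 0 else coeff (s - Finsupp.single i 1) f := by
  rw [← pow_one (X i), X_pow_eq, coeff_monomial_mul, one_mul]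
  have : Finsupp.single i 1 ≤ s ↔ s i ≠ 0 := by
    rw [Finsupp.single_le_iff]
    omega
  by_cases hs : s i = 0 <;> simp [hs, this]

lemma adicSum_eq_add_X_mul {i : σ} {F G : ℕ → MvPowerSeries σ S}
    (h : ∀ n, F (n + 1) = X i * G n) : adicSum i F = F 0 + X i * adicSum i G := by
  classical
  ext s
  rw [coeff_adicSum, sum_range_succ', add_comm, map_add, coeff_X_mul]
  congr 1
  simp_rw [h, coeff_X_mul]
  split_ifs with hs
  · simp [hs]
  · rw [coeff_adicSum, Finsupp.tsub_apply, Finsupp.single_eq_same,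
      Nat.sub_add_cancel (Nat.pos_of_ne_zero hs)]

lemma adicSum_mul_left {i : σ} {P : MvPowerSeries σ S} (hP : ∀ s, s i ≠ 0 → coeff s P = 0)
    (G : ℕ → MvPowerSeries σ S) : adicSum i (fun n => P * G n) = P * adicSum i G := by
  classical
  ext s
  simp only [coeff_adicSum, coeff_mul, mul_sum]
  rw [sum_comm]
  refine sum_congr rfl fun p hp => ?_
  by_cases h : p.1 i = 0
  · have : p.2 i = s i := by
      rw [← (mem_antidiagonal.1 hp), Finsupp.add_apply, h, zero_add]
    rw [this]
  · simp [hP _ h]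

/-- `R[[ρ X i, X j (j ≠ i)]]`; for `σ = Fin 2` and `i = 1` this is the paper's `R[[k, ρξ]]`. -/
def scaledSubring (R : Subring S) (ρ : S) (i : σ) : Subring (MvPowerSeries σ S) where
  carrier := {f | ∀ s, ∃ c ∈ R, coeff s f = ρ ^ s i * c}
  mul_mem' {f g} hf hg s := by
    classical
    rw [coeff_mul]
    refine R.exists_sum_eq_mul _ _ _ fun p hp => ?_
    obtain ⟨c₁, hc₁, e₁⟩ := hf p.1
    obtain ⟨c₂, hc₂, e₂⟩ := hg p.2
    refine ⟨c₁ * c₂, R.mul_mem hc₁ hc₂, ?_⟩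
    rw [e₁, e₂, ← mem_antidiagonal.1 hp, Finsupp.add_apply, pow_add]
    ring
  one_mem' s := by
    classical
    by_cases hs : s = 0
    · exact ⟨1, R.one_mem, by simp [hs]⟩
    · exact ⟨0, R.zero_mem, by simp [coeff_one, hs]⟩
  add_mem' {f g} hf hg s := by
    obtain ⟨c₁, hc₁, e₁⟩ := hf s
    obtain ⟨c₂, hc₂, e₂⟩ := hg s
    exact ⟨c₁ + c₂, R.add_mem hc₁ hc₂, by rw [map_add, e₁, e₂, mul_add]⟩
  zero_mem' _ := ⟨0, R.zero_mem, by simp⟩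
  neg_mem' {f} hf s := by
    obtain ⟨c, hc, e⟩ := hf s
    exact ⟨-c, R.neg_mem hc, by rw [map_neg, e, mul_neg]⟩

variable {R : Subring S} {ρ : S} {i : σ}

lemma monomial_mem_scaledSubring (s : σ →₀ ℕ) {c : S} (hc : c ∈ R) :
    monomial s (ρ ^ s i * c) ∈ scaledSubring R ρ i := by
  classical
  intro t
  rw [coeff_monomial]
  split_ifs with h
  · exact ⟨c, hc, by rw [h]⟩
  · exact ⟨0, R.zero_mem, by rw [mul_zero]⟩

lemma C_mem_scaledSubring {c : S} (hc : c ∈ R) : C c ∈ scaledSubring R ρ i := by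
  simpa using monomial_mem_scaledSubring (ρ := ρ) (i := i) 0 hc

lemma X_mem_scaledSubring {j : σ} (hj : j ≠ i) : X j ∈ scaledSubring R ρ i := by
  simpa [X_def, Finsupp.single_eq_of_ne' hj] using
    monomial_mem_scaledSubring (ρ := ρ) (i := i) (Finsupp.single j 1) R.one_mem

lemma C_mul_X_mem_scaledSubring : C ρ * X i ∈ scaledSubring R ρ i := by
  have : C ρ * X i = monomial (Finsupp.single i 1) (ρ ^ (Finsupp.single i 1) i * 1) := by
    rw [X_def, ← monomial_zero_eq_C_apply, monomial_mul_monomial]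
    simp
  rw [this]
  exact monomial_mem_scaledSubring _ R.one_mem

lemma adicSum_mem_scaledSubring {F : ℕ → MvPowerSeries σ S}
    (hF : ∀ n, F n ∈ scaledSubring R ρ i) : adicSum i F ∈ scaledSubring R ρ i := fun s =>
  R.exists_sum_eq_mul _ (range (s i + 1)) _ fun n _ => hF n s

lemma mem_scaledSubring_of_coeff_single {g : MvPowerSeries (Fin 2) S}
    (hg0 : ∀ s : Fin 2 →₀ ℕ, s 0 ≠ 0 → coeff s g = 0)
    (hg1 : ∀ n : ℕ, ∃ c ∈ R, coeff (Finsupp.single 1 n) g = ρ ^ n * c) :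
    g ∈ scaledSubring R ρ 1 := by
  intro s
  by_cases hs : s 0 = 0
  · have : s = Finsupp.single 1 (s 1) := by
      ext j
      fin_cases j <;> simp [hs]
    rw [this]
    simpa using hg1 (s 1)
  · exact ⟨0, R.zero_mem, by rw [hg0 s hs, mul_zero]⟩

end MvPowerSeries

section Binomial

variable (A : Type) [CommRing A] [Algebra ℚ A]

lemma binomK_zero : binomK A 0 = 1 := by
  simp [binomK]

lemma binomK_succ (n : ℕ) :
    binomK A (n + 1) = ((n + 1)! : ℚ)⁻¹ •
      (X 0 * ∏ i ∈ range n, (X 0 - ((i + 1 : ℕ) : MvPowerSeries (Fin 2) A))) := by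
  rw [binomK, prod_range_succ', Nat.cast_zero, sub_zero, mul_comm]

end Binomial

noncomputable def binomTerm (A : Type) [CommRing A] [Algebra K3 A] (r : K3)
    (g : MvPowerSeries (Fin 2) A) (n : ℕ) : MvPowerSeries (Fin 2) A :=
  C (algebraMap K3 A (algebraMap ℚ K3 ((n + 1)! : ℚ)⁻¹ * π3 ^ n)) *
    (∏ i ∈ range n, (X 0 - ((i + 1 : ℕ) : MvPowerSeries (Fin 2) A))) * g *
    (C (algebraMap K3 A r) * X 1 * g) ^ n

lemma binomK_succ_mul_pow (A : Type) [CommRing A] [Algebra K3 A] [Algebra ℚ A]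
    [IsScalarTower ℚ K3 A] (r : K3) (g : MvPowerSeries (Fin 2) A) (n : ℕ) :
    binomK A (n + 1) * (algebraMap K3 A (r * π3) • (X 1 * g)) ^ (n + 1) =
      X 1 * (algebraMap K3 A (r * π3) • X 0 * binomTerm A r g n) := by
  rw [binomK_succ, binomTerm, Algebra.smul_def, MvPowerSeries.algebraMap_apply, smul_eq_C_mul,
    smul_eq_C_mul, IsScalarTower.algebraMap_apply ℚ K3 A]
  simp only [map_mul, map_pow]
  ring

lemma binomTerm_mem_scaledSubring {A : Type} [CommRing A] [Algebra K3 A] {R : Subring A}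
    (hR : ∀ x : K3, IsIntegral ℤ_[3] x → algebraMap K3 A x ∈ R) {r : K3}
    {g : MvPowerSeries (Fin 2) A} (hg : g ∈ scaledSubring R (algebraMap K3 A r) 1) (n : ℕ) :
    binomTerm A r g n ∈ scaledSubring R (algebraMap K3 A r) 1 := by
  refine Subring.mul_mem _ (Subring.mul_mem _ (Subring.mul_mem _ ?_ ?_) hg)
    (Subring.pow_mem _ (Subring.mul_mem _ C_mul_X_mem_scaledSubring hg) n)
  · exact C_mem_scaledSubring (hR _ (isIntegral_factorial_inv_mul_π3_pow n))
  · exact Subring.prod_mem _ fun i _ =>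
      Subring.sub_mem _ (X_mem_scaledSubring (by decide)) (natCast_mem _ _)

theorem stmt15_general (A : Type) [CommRing A] [Algebra K3 A] [Algebra ℚ A] [IsScalarTower ℚ K3 A]
    (R : Subring A) (hR : ∀ x : K3, IsIntegral ℤ_[3] x → algebraMap K3 A x ∈ R)
    (r : K3)
    (g : MvPowerSeries (Fin 2) A)
    (hg0 : ∀ s : Fin 2 →₀ ℕ, s 0 ≠ 0 → MvPowerSeries.coeff s g = 0)
    (hgR : ∀ n : ℕ, ∃ c ∈ R,
      MvPowerSeries.coeff (Finsupp.single 1 n) g = (algebraMap K3 A r) ^ n * c) :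
    ∃ h : MvPowerSeries (Fin 2) A,
      (∀ i j : ℕ, ∃ c ∈ R,
        MvPowerSeries.coeff (Finsupp.single 0 i + Finsupp.single 1 j) h =
          (algebraMap K3 A r) ^ j * c) ∧
      binomialExpansion A r g =
        1 + algebraMap K3 A (r * π3) •
          (MvPowerSeries.X 0 * (MvPowerSeries.X 1 * h)) := by
  have hg := mem_scaledSubring_of_coeff_single hg0 hgR
  refine ⟨adicSum 1 (binomTerm A r g), fun i j => ?_, ?_⟩
  · simpa using
      adicSum_mem_scaledSubring (binomTerm_mem_scaledSubring hR hg) (.single 0 i + .single 1 j)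
  have hX0 : ∀ s : Fin 2 →₀ ℕ, s 1 ≠ 0 →
      coeff s (algebraMap K3 A (r * π3) • X 0 : MvPowerSeries (Fin 2) A) = 0 := by
    intro s hs
    rw [coeff_smul, coeff_X, if_neg (by rintro rfl; simp at hs), mul_zero]
  change adicSum 1 (fun n => binomK A n * _ ^ n) = _
  rw [adicSum_eq_add_X_mul (binomK_succ_mul_pow A r g), adicSum_mul_left hX0, binomK_zero,
    pow_zero, mul_one, smul_mul_assoc, mul_smul_comm, mul_left_comm]

/-- Lemma 3.2 (binomial lemma): if `R` is a commutative ring containing `O_K` (realized as a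
subring `R` of a `K`-algebra `A` containing the image of every element of `K` integral over
`ℤ₃`), `r ∈ O_K`, and `g ∈ R[[rξ]]`, then `(1 + rπξg)^k ∈ 1 + rπk·ξ·R[[k, rξ]]`. -/
theorem stmt15 (A : Type) [CommRing A] [Algebra K3 A] [Algebra ℚ A] [IsScalarTower ℚ K3 A]
    (R : Subring A) (hR : ∀ x : K3, IsIntegral ℤ_[3] x → algebraMap K3 A x ∈ R)
    (r : K3) (hr : IsIntegral ℤ_[3] r)
    (g : MvPowerSeries (Fin 2) A)
    (hg0 : ∀ s : Fin 2 →₀ ℕ, s 0 ≠ 0 → MvPowerSeries.coeff s g = 0)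
    (hgR : ∀ n : ℕ, ∃ c ∈ R,
      MvPowerSeries.coeff (Finsupp.single 1 n) g = (algebraMap K3 A r) ^ n * c) :
    ∃ h : MvPowerSeries (Fin 2) A,
      (∀ i j : ℕ, ∃ c ∈ R,
        MvPowerSeries.coeff (Finsupp.single 0 i + Finsupp.single 1 j) h =
          (algebraMap K3 A r) ^ j * c) ∧
      binomialExpansion A r g =
        1 + algebraMap K3 A (r * π3) •
          (MvPowerSeries.X 0 * (MvPowerSeries.X 1 * h)) :=
  stmt15_general A R hR r g hg0 hgR
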